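/- arXiv:2503.02735 — 5 statements merged into one kernel-verified Lean document; each statement's English description precedes it below -/
import Mathlib

section
/- Consider a multi-armed bandit with finite action set 𝒜 and reward distributions P_a supported on [0, R*], with means Q(a). Let Π_N = {π₁,…,π_N} be strictly positive target policies with KL-barycenter π_KL(a) = (1/N)∑_{i=1}^N π_i(a), let σ_KL = max_{i,a} π_i(a)/π_KL(a), and let v(π) = ∑_a π(a)Q(a) with best target policy π* = argmax_{1≤i≤N} v(π_i). Let (A_t, R_t), t = 1,…,n, be i.i.d. with A_t ∼ π_KL and R_t | A_t = a ∼ P_a, and let v̂_n(π_i) = (1/n)∑_{t=1}^n (π_i(A_t)/π_KL(A_t)) R_t. For any δ ∈ (0,1) and ε > 0, if n ≥ 2 R*² σ_KL² log(N/δ) / ε², then for any (measurable) selection π̂_n satisfying v̂_n(π̂_n) = max_{1≤i≤N} v̂_n(π_i), the regret ℛ(π̂_n) = v(π*) − v(π̂_n) satisfies P( ℛ(π̂_n) < ε ) ≥ 1 − δ. -/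
/-!
Each importance-weighted reward `πᵢ(A)/π_KL(A) · R` lies in `[0, σ_KL R*]` and has mean `v(πᵢ)`
under `π_KL`, so by Hoeffding's inequality the estimate `v̂ₙ(πᵢ)` deviates from `v(πᵢ)` by `ε/2`
in a given direction with probability at most `exp(-n ε² / (2 σ_KL² R*²)) ≤ δ/N`. If `v̂ₙ(π*)` is
not underestimated by `ε/2` and no other `v̂ₙ(πᵢ)` is overestimated by `ε/2`, the empirical
maximiser has regret below `ε`; these are `N` one-sided events, whence the union bound gives `δ`.
-/

open Finset Real MeasureTheory ProbabilityTheory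

section ActionRewardLaw

variable {α : Type*} [Fintype α] [MeasurableSpace α]

/-- The law of one sample `(A, R)`: `A ∼ w` and `R ∼ P a` given `A = a`. -/
noncomputable def actionRewardLaw (w : α → ℝ) (P : α → Measure ℝ) : Measure (α × ℝ) :=
  ∑ a, ENNReal.ofReal (w a) • (Measure.dirac a).prod (P a)

variable {w : α → ℝ} {P : α → Measure ℝ}

lemma isProbabilityMeasure_actionRewardLaw [∀ a, IsProbabilityMeasure (P a)]
    (hw : ∀ a, 0 ≤ w a) (hw1 : ∑ a, w a = 1) : IsProbabilityMeasure (actionRewardLaw w P) := by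
  constructor
  simp only [actionRewardLaw, Measure.coe_finsetSum, Finset.sum_apply, Measure.smul_apply,
    measure_univ, smul_eq_mul, mul_one]
  rw [← ENNReal.ofReal_sum_of_nonneg fun a _ ↦ hw a, hw1, ENNReal.ofReal_one]

lemma ae_snd_mem_actionRewardLaw [∀ a, SFinite (P a)] {S : Set ℝ} (hS : MeasurableSet S)
    (hP : ∀ a, ∀ᵐ r ∂P a, r ∈ S) : ∀ᵐ z ∂actionRewardLaw w P, z.2 ∈ S := by
  rw [actionRewardLaw, ← Measure.sum_fintype, Measure.ae_sum_iff]
  intro a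
  refine Measure.ae_smul_measure ?_ _
  rw [Measure.dirac_prod, ae_map_iff measurable_prodMk_left.aemeasurable (measurable_snd hS)]
  exact hP a

lemma measurable_mul_snd [MeasurableSingletonClass α] (g : α → ℝ) :
    Measurable fun z : α × ℝ ↦ g z.1 * z.2 :=
  Measurable.mul (f := fun z : α × ℝ ↦ g z.1) ((measurable_of_countable g).comp measurable_fst)
    measurable_snd

lemma ae_mul_snd_mem_Icc_actionRewardLaw [∀ a, SFinite (P a)] {g : α → ℝ} {σ R : ℝ}
    (hg : ∀ a, 0 ≤ g a) (hgσ : ∀ a, g a ≤ σ) (hP : ∀ a, ∀ᵐ r ∂P a, r ∈ Set.Icc 0 R) :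
    ∀ᵐ z ∂actionRewardLaw w P, g z.1 * z.2 ∈ Set.Icc 0 (R * σ) := by
  filter_upwards [ae_snd_mem_actionRewardLaw measurableSet_Icc hP] with z hz
  exact ⟨mul_nonneg (hg z.1) hz.1, by nlinarith [hg z.1, hgσ z.1, hz.1, hz.2]⟩

lemma integral_mul_snd_actionRewardLaw [MeasurableSingletonClass α] [∀ a, SFinite (P a)]
    (hw : ∀ a, 0 ≤ w a) (hP : ∀ a, Integrable id (P a)) (g : α → ℝ) :
    ∫ z, g z.1 * z.2 ∂actionRewardLaw w P = ∑ a, w a * g a * ∫ r, r ∂P a := by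
  have hint (a : α) :
      Integrable (fun z : α × ℝ ↦ g z.1 * z.2) ((Measure.dirac a).prod (P a)) := by
    rw [Measure.dirac_prod, integrable_map_measure (measurable_mul_snd g).aestronglyMeasurable
      measurable_prodMk_left.aemeasurable]
    exact (hP a).const_mul (g a)
  rw [actionRewardLaw,
    integral_finsetSum_measure fun a _ ↦ (hint a).smul_measure ENNReal.ofReal_ne_top]
  refine Finset.sum_congr rfl fun a _ ↦ ?_
  rw [integral_smul_measure, Measure.dirac_prod, integral_map
    measurable_prodMk_left.aemeasurable (measurable_mul_snd g).aestronglyMeasurable]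
  simp only [ENNReal.toReal_ofReal (hw a), smul_eq_mul, mul_assoc]
  exact congrArg (w a * ·) (integral_const_mul (g a) id)

end ActionRewardLaw

section Hoeffding

variable {Ω : Type*} [MeasurableSpace Ω] {ν : Measure Ω} [IsProbabilityMeasure ν] {X : Ω → ℝ}
  {a b : ℝ} {n : ℕ} {s : ℝ}

lemma measureReal_sampleMean_ge_le (hX : Measurable X) (hab : ∀ᵐ x ∂ν, X x ∈ Set.Icc a b)
    (hn : 0 < n) (hs : 0 ≤ s) :
    (Measure.pi fun _ : Fin n ↦ ν).real {ω | ν[X] + s ≤ (∑ t, X (ω t)) / n}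
      ≤ exp (-2 * n * s ^ 2 / (b - a) ^ 2) := by
  have hsubG (t : Fin n) : HasSubgaussianMGF (fun ω ↦ X (ω t) - ν[X])
      ((‖b - a‖₊ / 2) ^ 2) (Measure.pi fun _ : Fin n ↦ ν) := by
    have h : HasSubgaussianMGF (fun x ↦ X x - ν[X]) ((‖b - a‖₊ / 2) ^ 2)
        ((Measure.pi fun _ : Fin n ↦ ν).map (Function.eval t)) := by
      rw [(measurePreserving_eval (fun _ ↦ ν) t).map_eq]
      exact hasSubgaussianMGF_of_mem_Icc hX.aemeasurable hab
    exact h.of_map (measurePreserving_eval (fun _ ↦ ν) t).measurable.aemeasurable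
  have hindep : iIndepFun (fun t (ω : Fin n → Ω) ↦ X (ω t) - ν[X]) (Measure.pi fun _ ↦ ν) :=
    iIndepFun_pi (X := fun _ x ↦ X x - ν[X]) fun _ ↦ (hX.sub_const _).aemeasurable
  have hoeffding := HasSubgaussianMGF.measure_sum_ge_le_of_iIndepFun hindep (s := univ)
    (fun t _ ↦ hsubG t) (mul_nonneg n.cast_nonneg hs)
  convert hoeffding using 2
  · ext ω
    simp only [Set.mem_ofPred_eq, Finset.sum_sub_distrib, Finset.sum_const, card_univ,
      Fintype.card_fin, nsmul_eq_mul, le_div_iff₀ (Nat.cast_pos.mpr hn : (0 : ℝ) < n)]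
    constructor <;> intro h <;> linarith
  · simp only [Finset.sum_const, card_univ, Fintype.card_fin, nsmul_eq_mul]
    push_cast
    rw [Real.norm_eq_abs, div_pow, sq_abs]
    field_simp

lemma measureReal_sampleMean_le_le (hX : Measurable X) (hab : ∀ᵐ x ∂ν, X x ∈ Set.Icc a b)
    (hn : 0 < n) (hs : 0 ≤ s) :
    (Measure.pi fun _ : Fin n ↦ ν).real {ω | (∑ t, X (ω t)) / n ≤ ν[X] - s}
      ≤ exp (-2 * n * s ^ 2 / (b - a) ^ 2) := by
  have hneg : ∀ᵐ x ∂ν, -X x ∈ Set.Icc (-b) (-a) := by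
    filter_upwards [hab] with x hx using ⟨neg_le_neg hx.2, neg_le_neg hx.1⟩
  convert measureReal_sampleMean_ge_le hX.neg hneg hn hs using 3
  · ext ω
    simp only [Pi.neg_apply, integral_neg, Finset.sum_neg_distrib, neg_div]
    constructor <;> intro h <;> linarith
  · ring

end Hoeffding

lemma ofReal_one_sub_le_of_compl_subset_iUnion {Ω ι : Type*} [MeasurableSpace Ω] {m : Measure Ω}
    [IsProbabilityMeasure m] [Fintype ι] {G : Set Ω} {E : ι → Set Ω} (hG : Gᶜ ⊆ ⋃ i, E i)
    {δ : ℝ} (hδ : 0 ≤ δ) (hE : ∀ i, m.real (E i) ≤ δ / Fintype.card ι) :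
    ENNReal.ofReal (1 - δ) ≤ m G := by
  have hunion : m.real Gᶜ ≤ δ := calc
    m.real Gᶜ ≤ ∑ i, m.real (E i) := (measureReal_mono hG).trans (measureReal_iUnion_fintype_le E)
    _ ≤ ∑ _i : ι, δ / Fintype.card ι := Finset.sum_le_sum fun i _ ↦ hE i
    _ ≤ δ := by
      rw [Finset.sum_const, card_univ, nsmul_eq_mul]
      rcases (Fintype.card ι).eq_zero_or_pos with h | h
      · simp [h, hδ]
      · rw [mul_div_cancel₀ _ (by positivity)]
  have hsplit : 1 ≤ m.real G + m.real Gᶜ := by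
    simpa using measureReal_union_le (μ := m) G Gᶜ
  rw [← ofReal_measureReal]
  exact ENNReal.ofReal_le_ofReal (by linarith)

lemma compl_setOf_sub_lt_subset_iUnion {Ω ι : Type*} [DecidableEq ι] (v : ι → ℝ)
    {vhat : Ω → ι → ℝ} {iHat : Ω → ι} (istar : ι)
    (hargmax : ∀ ω, vhat ω istar ≤ vhat ω (iHat ω)) {ε : ℝ} (hε : 0 < ε) :
    {ω | v istar - v (iHat ω) < ε}ᶜ ⊆
      ⋃ i, {ω | if i = istar then vhat ω i ≤ v i - ε / 2 else v i + ε / 2 ≤ vhat ω i} := by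
  intro ω hω
  simp only [Set.mem_compl_iff, Set.mem_ofPred_eq, not_lt] at hω
  by_cases hstar : vhat ω istar ≤ v istar - ε / 2
  · exact Set.mem_iUnion.mpr ⟨istar, by simpa using hstar⟩
  · have hne : iHat ω ≠ istar := by
      rintro h
      rw [h] at hω
      linarith
    refine Set.mem_iUnion.mpr ⟨iHat ω, ?_⟩
    simp only [Set.mem_ofPred_eq, if_neg hne]
    linarith [hargmax ω]

lemma exp_neg_le_div_of_le {B N δ ε n : ℝ} (hB : 0 < B) (hN : 0 < N) (hδ : 0 < δ) (hε : 0 < ε)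
    (hn : 2 * B ^ 2 * log (N / δ) / ε ^ 2 ≤ n) :
    exp (-2 * n * (ε / 2) ^ 2 / B ^ 2) ≤ δ / N := by
  rw [← exp_log (div_pos hδ hN), exp_le_exp, log_div hδ.ne' hN.ne', div_le_iff₀ (by positivity)]
  rw [div_le_iff₀ (by positivity), log_div hN.ne' hδ.ne'] at hn
  nlinarith

lemma barycenter_pos {α : Type*} {N : ℕ} {p : Fin N → α → ℝ} (hpos : ∀ i a, 0 < p i a)
    (i₀ : Fin N) (a : α) : 0 < 1 / (N : ℝ) * ∑ i, p i a :=
  mul_pos (one_div_pos.mpr (Nat.cast_pos.mpr i₀.pos))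
    (Finset.sum_pos (fun i _ ↦ hpos i a) ⟨i₀, mem_univ _⟩)

lemma sum_barycenter {α : Type*} [Fintype α] {N : ℕ} {p : Fin N → α → ℝ} (hN : 0 < N)
    (hsum : ∀ i, ∑ a, p i a = 1) : ∑ a, 1 / (N : ℝ) * ∑ i, p i a = 1 := by
  rw [← Finset.mul_sum, Finset.sum_comm, Finset.sum_congr rfl fun i _ ↦ hsum i]
  simp [hN.ne']

lemma le_ciSup₂_of_finite {ι κ : Type*} [Finite ι] [Finite κ] (f : ι → κ → ℝ) (i : ι) (k : κ) :
    f i k ≤ ⨆ i, ⨆ k, f i k :=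
  le_ciSup₂ (Set.finite_iUnion fun _ ↦ Set.finite_range _).bddAbove i k

theorem KLPE_regret_bound_general {α : Type*} [Fintype α] [MeasurableSpace α]
    [MeasurableSingletonClass α]
    (Rstar : ℝ) (hR : 0 < Rstar)
    (P : α → Measure ℝ) (hprob : ∀ a, IsProbabilityMeasure (P a))
    (hsupp : ∀ a, P a (Set.Icc 0 Rstar) = 1)
    (Q : α → ℝ) (hQ : ∀ a, Q a = ∫ x, x ∂(P a))
    (N : ℕ) (hN : 0 < N)
    (p : Fin N → α → ℝ) (hpos : ∀ i a, 0 < p i a) (hsum : ∀ i, ∑ a, p i a = 1)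
    -- the KL-barycenter behavior policy
    (pKL : α → ℝ) (hpKL : ∀ a, pKL a = (1 / (N : ℝ)) * ∑ i, p i a)
    -- the maximal importance weight
    (σKL : ℝ) (hσKL : σKL = ⨆ i : Fin N, ⨆ a : α, p i a / pKL a)
    -- values and the best target policy
    (v : (α → ℝ) → ℝ) (hv : ∀ q, v q = ∑ a, q a * Q a)
    (istar : Fin N)
    -- joint law of one pair and sample size
    (μ : Measure (α × ℝ))
    (hμ : μ = ∑ a : α, (ENNReal.ofReal (pKL a)) • ((Measure.dirac a).prod (P a)))
    (n : ℕ) (hn : 0 < n)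
    (δ ε : ℝ) (hδ : δ ∈ Set.Ioo (0:ℝ) 1) (hε : 0 < ε)
    (hsample : (n : ℝ) ≥ 2 * Rstar ^ 2 * σKL ^ 2 * Real.log (N / δ) / ε ^ 2)
    -- the importance sampling estimates
    (vhat : (Fin n → α × ℝ) → Fin N → ℝ)
    (hvhat : ∀ ω i, vhat ω i = (1 / (n : ℝ)) * ∑ t, (p i (ω t).1 / pKL (ω t).1) * (ω t).2)
    -- a measurable selection maximizing the estimated values
    (iHat : (Fin n → α × ℝ) → Fin N)
    (hargmax : ∀ ω i, vhat ω i ≤ vhat ω (iHat ω)) :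
    (Measure.pi (fun _ : Fin n => μ))
        {ω : Fin n → α × ℝ | v (p istar) - v (p (iHat ω)) < ε}
      ≥ ENNReal.ofReal (1 - δ) := by
  have := hprob
  have hpKLpos (a : α) : 0 < pKL a := hpKL a ▸ barycenter_pos hpos istar a
  have hpKLsum : ∑ a, pKL a = 1 := by simp_rw [hpKL]; exact sum_barycenter hN hsum
  have hratio (i : Fin N) (a : α) : p i a / pKL a ≤ σKL :=
    hσKL ▸ le_ciSup₂_of_finite (fun i a ↦ p i a / pKL a) i a
  obtain ⟨a₀⟩ : Nonempty α := by
    by_contra h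
    simpa [not_nonempty_iff.mp h] using hsum istar
  have hσpos : 0 < σKL := (div_pos (hpos istar a₀) (hpKLpos a₀)).trans_le (hratio istar a₀)
  obtain rfl : μ = actionRewardLaw pKL P := hμ
  have := isProbabilityMeasure_actionRewardLaw (P := P) (fun a ↦ (hpKLpos a).le) hpKLsum
  have hreward (a : α) : ∀ᵐ r ∂P a, r ∈ Set.Icc 0 Rstar :=
    (ae_mem_iff_measure_eq measurableSet_Icc.nullMeasurableSet).mpr (by rw [hsupp, measure_univ])
  have hweighted (i : Fin N) := ae_mul_snd_mem_Icc_actionRewardLaw (w := pKL)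
    (fun a ↦ (div_pos (hpos i a) (hpKLpos a)).le) (hratio i) hreward
  have hmean (i : Fin N) : ∫ z, p i z.1 / pKL z.1 * z.2 ∂actionRewardLaw pKL P = v (p i) := by
    refine (integral_mul_snd_actionRewardLaw (fun a ↦ (hpKLpos a).le)
      (fun a ↦ Integrable.of_mem_Icc 0 Rstar aemeasurable_id (hreward a))
      (fun a ↦ p i a / pKL a)).trans ?_
    rw [hv]
    exact Finset.sum_congr rfl fun a _ ↦ by rw [← hQ, mul_div_cancel₀ _ (hpKLpos a).ne']
  have htail : exp (-2 * n * (ε / 2) ^ 2 / (Rstar * σKL - 0) ^ 2) ≤ δ / N := by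
    rw [sub_zero]
    exact exp_neg_le_div_of_le (mul_pos hR hσpos) (Nat.cast_pos.mpr hN) hδ.1 hε
      (by rwa [mul_pow, ← mul_assoc])
  refine ofReal_one_sub_le_of_compl_subset_iUnion
    (compl_setOf_sub_lt_subset_iUnion (fun i ↦ v (p i)) istar (fun ω ↦ hargmax ω istar) hε)
    hδ.1.le fun i ↦ ?_
  rw [Fintype.card_fin]
  split_ifs
  all_goals simp_rw [hvhat, one_div_mul_eq_div, ← hmean]
  · exact (measureReal_sampleMean_le_le (measurable_mul_snd fun a ↦ p i a / pKL a)
      (hweighted i) hn (half_pos hε).le).trans htail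
  · exact (measureReal_sampleMean_ge_le (measurable_mul_snd fun a ↦ p i a / pKL a)
      (hweighted i) hn (half_pos hε).le).trans htail

/-- sample complexity of best-policy selection with the KL-barycenter
behavior policy.  With `π_KL = (1/N) ∑ᵢ πᵢ`, `σ_KL = maxᵢ max_a πᵢ(a)/π_KL(a)`, and a
dataset of `n ≥ 2 R*² σ_KL² log(N/δ)/ε²` i.i.d. action-reward pairs drawn under
`π_KL` (modeled by the `n`-fold product of `∑ₐ π_KL(a) • (δₐ ⊗ P a)`), any measurable
selection `î` maximizing the importance-sampling estimates satisfies
`P(v(π*) − v(π_î) < ε) ≥ 1 − δ`, where `π*` is the best target policy. -/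
theorem KLPE_regret_bound {α : Type*} [Fintype α] [MeasurableSpace α]
    [MeasurableSingletonClass α]
    (Rstar : ℝ) (hR : 0 < Rstar)
    (P : α → Measure ℝ) (hprob : ∀ a, IsProbabilityMeasure (P a))
    (hsupp : ∀ a, P a (Set.Icc 0 Rstar) = 1)
    (Q : α → ℝ) (hQ : ∀ a, Q a = ∫ x, x ∂(P a))
    (N : ℕ) (hN : 0 < N)
    (p : Fin N → α → ℝ) (hpos : ∀ i a, 0 < p i a) (hsum : ∀ i, ∑ a, p i a = 1)
    -- the KL-barycenter behavior policy
    (pKL : α → ℝ) (hpKL : ∀ a, pKL a = (1 / (N : ℝ)) * ∑ i, p i a)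
    -- the maximal importance weight
    (σKL : ℝ) (hσKL : σKL = ⨆ i : Fin N, ⨆ a : α, p i a / pKL a)
    -- values and the best target policy
    (v : (α → ℝ) → ℝ) (hv : ∀ q, v q = ∑ a, q a * Q a)
    (istar : Fin N) (hbest : ∀ i, v (p i) ≤ v (p istar))
    -- joint law of one pair and sample size
    (μ : Measure (α × ℝ))
    (hμ : μ = ∑ a : α, (ENNReal.ofReal (pKL a)) • ((Measure.dirac a).prod (P a)))
    (n : ℕ) (hn : 0 < n)
    (δ ε : ℝ) (hδ : δ ∈ Set.Ioo (0:ℝ) 1) (hε : 0 < ε)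
    (hsample : (n : ℝ) ≥ 2 * Rstar ^ 2 * σKL ^ 2 * Real.log (N / δ) / ε ^ 2)
    -- the importance sampling estimates
    (vhat : (Fin n → α × ℝ) → Fin N → ℝ)
    (hvhat : ∀ ω i, vhat ω i = (1 / (n : ℝ)) * ∑ t, (p i (ω t).1 / pKL (ω t).1) * (ω t).2)
    -- a measurable selection maximizing the estimated values
    (iHat : (Fin n → α × ℝ) → Fin N) (hmeas : Measurable iHat)
    (hargmax : ∀ ω i, vhat ω i ≤ vhat ω (iHat ω)) :
    (Measure.pi (fun _ : Fin n => μ))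
        {ω : Fin n → α × ℝ | v (p istar) - v (p (iHat ω)) < ε}
      ≥ ENNReal.ofReal (1 - δ) :=
  KLPE_regret_bound_general Rstar hR P hprob hsupp Q hQ N hN p hpos hsum pKL hpKL σKL hσKL v hv
    istar μ hμ n hn δ ε hδ hε hsample vhat hvhat iHat hargmax
end

section
/- Fix an integer N ≥ 3 and consider the two-element action set 𝒜 = {a₁, a₂} with target policies π₁ = (1 − 1/N, 1/N) and π₂ = ⋯ = π_N = (1/N, 1 − 1/N). Then the KL-barycenter π_KL = (1/N)∑_{i=1}^N π_i satisfies π_KL(a₁) = 2(N−1)/N² and π_KL(a₂) = ((N−1)² + 1)/N², and the maximal importance weight σ_KL = max_{1≤i≤N} max_{a∈𝒜} π_i(a)/π_KL(a) satisfies σ_KL ≥ N/2 (the maximum being attained at π₁(a₁)/π_KL(a₁) = N/2). -/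
theorem Fintype.sum_eq_add_card_sub_one_mul {ι R : Type*} [Fintype ι] [Ring R] (f : ι → R)
    (j : ι) (c : R) (hf : ∀ i, i ≠ j → f i = c) :
    ∑ i, f i = f j + ((Fintype.card ι : R) - 1) * c := by
  classical
  rw [← Finset.add_sum_erase _ _ (Finset.mem_univ j),
    Finset.sum_congr rfl fun i hi => hf i (Finset.ne_of_mem_erase hi), Finset.sum_const,
    Finset.card_erase_of_mem (Finset.mem_univ j), Finset.card_univ, nsmul_eq_mul,
    Nat.cast_sub (Fintype.card_pos_iff.2 ⟨j⟩), Nat.cast_one]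

/-- the lower-bound construction. On the two-element action set `Fin 2`
(`0 = a₁`, `1 = a₂`), with `π₁ = (1 − 1/N, 1/N)` and `π₂ = ⋯ = π_N = (1/N, 1 − 1/N)`,
the KL-barycenter satisfies `π_KL(a₁) = 2(N−1)/N²`, `π_KL(a₂) = ((N−1)² + 1)/N²`,
the weight `π₁(a₁)/π_KL(a₁)` equals `N/2`, and hence the maximal importance weight
`σ_KL = maxᵢ max_a πᵢ(a)/π_KL(a)` is at least `N/2`. -/
theorem lower_bound_construction_sigmaKL (N : ℕ) (hN : 3 ≤ N)
    (p : Fin N → Fin 2 → ℝ)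
    (hp1 : p ⟨0, by omega⟩ = fun a => if a = 0 then 1 - 1 / (N : ℝ) else 1 / (N : ℝ))
    (hpi : ∀ i : Fin N, i ≠ ⟨0, by omega⟩ →
      p i = fun a => if a = 0 then 1 / (N : ℝ) else 1 - 1 / (N : ℝ))
    (pKL : Fin 2 → ℝ) (hpKL : ∀ a, pKL a = (1 / (N : ℝ)) * ∑ i, p i a) :
    pKL 0 = 2 * ((N : ℝ) - 1) / (N : ℝ) ^ 2 ∧
    pKL 1 = (((N : ℝ) - 1) ^ 2 + 1) / (N : ℝ) ^ 2 ∧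
    p ⟨0, by omega⟩ 0 / pKL 0 = (N : ℝ) / 2 ∧
    (⨆ i : Fin N, ⨆ a : Fin 2, p i a / pKL a) ≥ (N : ℝ) / 2 := by
  have hN0 : (N : ℝ) ≠ 0 := by positivity
  have hN1 : (N : ℝ) - 1 ≠ 0 := sub_ne_zero.2 (by norm_cast; omega)
  have hpKL_eq : ∀ a, pKL a = (p ⟨0, by omega⟩ a +
      ((N : ℝ) - 1) * (if a = 0 then 1 / (N : ℝ) else 1 - 1 / (N : ℝ))) / N := fun a => by
    rw [hpKL, Fintype.sum_eq_add_card_sub_one_mul (fun i => p i a) _ _ fun i hi => by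
      rw [hpi i hi], Fintype.card_fin]
    ring
  have hpKL_zero : pKL 0 = 2 * ((N : ℝ) - 1) / (N : ℝ) ^ 2 := by
    simp only [hpKL_eq, hp1, ↓reduceIte]
    field_simp
    ring
  have hpKL_one : pKL 1 = (((N : ℝ) - 1) ^ 2 + 1) / (N : ℝ) ^ 2 := by
    simp only [hpKL_eq, hp1, one_ne_zero, ↓reduceIte]
    field_simp
    ring
  have hratio : p ⟨0, by omega⟩ 0 / pKL 0 = (N : ℝ) / 2 := by
    simp only [hpKL_zero, hp1, ↓reduceIte]
    field_simp
  refine ⟨hpKL_zero, hpKL_one, hratio, ?_⟩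
  exact le_ciSup_of_le (Finite.bddAbove_range _) ⟨0, by omega⟩
    (le_ciSup_of_le (Finite.bddAbove_range _) 0 hratio.ge)
end

section
/- Let 𝒜 be a finite set and π₁,…,π_N strictly positive probability distributions on 𝒜 with KL-barycenter π_KL(a) = (1/N)∑_{i=1}^N π_i(a). Suppose D_KL(π_i ‖ π_KL) ≤ η for all i ∈ {1,…,N} and π_KL(a) > 0 for all a ∈ 𝒜. Then the maximal importance weight σ_KL = max_{i,a} π_i(a)/π_KL(a) satisfies σ_KL ≤ min( N , 1 + 2η/min_a π_KL(a) + 2√(2η)/√(min_a π_KL(a)) ). -/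
open Finset Real

/-- KL divergence between two distributions on a finite set. -/
noncomputable def KLdiv {α : Type*} [Fintype α] (ν μ : α → ℝ) : ℝ :=
  ∑ a, ν a * Real.log (ν a / μ a)

/-!
With `φ(x) = x log x + 1 - x ≥ 0` (`klFun`), for `ν, μ` of equal mass the divergence is
`KL(ν ‖ μ) = ∑ₐ μ(a) φ(ν(a)/μ(a))`, so each single term obeys `μ(a) φ(ν(a)/μ(a)) ≤ KL(ν ‖ μ)`.
Hence every importance weight `x = πᵢ(a)/π_KL(a)` satisfies `φ(x) ≤ η / minₐ π_KL(a)`, and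
`φ(s²) = (s - 1)² + 2 s φ(s) ≥ (s - 1)²` turns this into `x ≤ (1 + √(η / minₐ π_KL(a)))²`.
The bound `x ≤ N` is just `πᵢ(a) ≤ ∑ⱼ πⱼ(a) = N π_KL(a)`.
-/

open InformationTheory

lemma klFun_sq (s : ℝ) : klFun (s ^ 2) = (s - 1) ^ 2 + 2 * s * klFun s := by
  rw [klFun_apply, klFun_apply, Real.log_pow]
  push_cast
  ring

lemma sq_sqrt_sub_one_le_klFun {x : ℝ} (hx : 0 ≤ x) : (√x - 1) ^ 2 ≤ klFun x := by
  have hs : 0 ≤ √x := Real.sqrt_nonneg x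
  rw [← Real.sq_sqrt hx, Real.sqrt_sq hs, klFun_sq]
  exact le_add_of_nonneg_right (mul_nonneg (by positivity) (klFun_nonneg hs))

lemma le_one_add_sqrt_sq_of_klFun_le {x c : ℝ} (hx : 0 ≤ x) (h : klFun x ≤ c) :
    x ≤ (1 + √c) ^ 2 := by
  have hsqrt : √x - 1 ≤ √c :=
    calc √x - 1 ≤ |√x - 1| := le_abs_self _
      _ = √((√x - 1) ^ 2) := (Real.sqrt_sq_eq_abs _).symm
      _ ≤ √c := Real.sqrt_le_sqrt ((sq_sqrt_sub_one_le_klFun hx).trans h)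
  exact (Real.sqrt_le_left (by positivity)).mp (by linarith)

lemma mul_klFun_div (p : ℝ) {q : ℝ} (hq : q ≠ 0) :
    q * klFun (p / q) = p * Real.log (p / q) + q - p := by
  rw [klFun_apply]
  field_simp

section KLdiv

variable {α : Type*} [Fintype α] {ν μ : α → ℝ}

lemma KLdiv_eq_sum_mul_klFun (hμ : ∀ a, μ a ≠ 0) (h : ∑ a, ν a = ∑ a, μ a) :
    KLdiv ν μ = ∑ a, μ a * klFun (ν a / μ a) := by
  simp only [fun a => mul_klFun_div (ν a) (hμ a), sum_sub_distrib, sum_add_distrib, h,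
    add_sub_cancel_right, KLdiv]

lemma mul_klFun_le_KLdiv (hν : ∀ a, 0 ≤ ν a) (hμ : ∀ a, 0 < μ a)
    (h : ∑ a, ν a = ∑ a, μ a) (a : α) : μ a * klFun (ν a / μ a) ≤ KLdiv ν μ := by
  rw [KLdiv_eq_sum_mul_klFun (fun b => (hμ b).ne') h]
  exact single_le_sum (fun b _ => mul_nonneg (hμ b).le
    (klFun_nonneg (div_nonneg (hν b) (hμ b).le))) (mem_univ a)

end KLdiv

lemma one_add_sqrt_div_sq_le {η m : ℝ} (hm : 0 < m) (hη : 0 ≤ η) :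
    (1 + √(η / m)) ^ 2 ≤ 1 + 2 * η / m + 2 * √(2 * η) / √m := by
  have hsq : √(η / m) ^ 2 = η / m := Real.sq_sqrt (by positivity)
  have hroot : √(η / m) ≤ √(2 * η) / √m := by
    rw [← Real.sqrt_div' _ hm.le]
    gcongr
    linarith
  rw [mul_div_assoc, mul_div_assoc]
  calc (1 + √(η / m)) ^ 2 = 1 + η / m + 2 * √(η / m) := by rw [add_sq, hsq]; ring
    _ ≤ 1 + 2 * (η / m) + 2 * (√(2 * η) / √m) := by linarith [div_nonneg hη hm.le]

/-- if every target policy is `η`-close in KL to the barycenter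
`π_KL = (1/N)∑ᵢ πᵢ`, then the maximal importance weight satisfies
`σ_KL ≤ min(N, 1 + 2η/min_a π_KL(a) + 2√(2η)/√(min_a π_KL(a)))`. -/
theorem sigmaKL_eta_bound {α : Type*} [Fintype α] [Nonempty α] (N : ℕ) (hN : 0 < N)
    (p : Fin N → α → ℝ)
    (hpos : ∀ i a, 0 < p i a) (hsum : ∀ i, ∑ a, p i a = 1)
    (pKL : α → ℝ) (hpKL : ∀ a, pKL a = (1 / (N : ℝ)) * ∑ i, p i a)
    (hKLpos : ∀ a, 0 < pKL a)
    (η : ℝ) (hη : ∀ i, KLdiv (p i) pKL ≤ η) :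
    (⨆ i : Fin N, ⨆ a : α, p i a / pKL a)
      ≤ min (N : ℝ)
          (1 + 2 * η / (⨅ a : α, pKL a)
            + 2 * Real.sqrt (2 * η) / Real.sqrt (⨅ a : α, pKL a)) := by
  have hNne : (N : ℝ) ≠ 0 := by positivity
  have hcolumn : ∀ a, ∑ i, p i a = N * pKL a := fun a => by rw [hpKL]; field_simp
  have hmass : ∀ i, ∑ a, p i a = ∑ a, pKL a := fun i => by
    rw [hsum, ← mul_right_inj' hNne, mul_sum, ← sum_congr rfl fun a _ => hcolumn a, sum_comm]
    simp [hsum]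
  obtain ⟨a₀, ha₀⟩ := exists_eq_ciInf_of_finite (f := pKL)
  set m := ⨅ a, pKL a
  have hm : 0 < m := ha₀ ▸ hKLpos a₀
  have : Nonempty (Fin N) := ⟨⟨0, hN⟩⟩
  refine ciSup_le fun i => ciSup_le fun a => le_min ?_ ?_
  · rw [div_le_iff₀ (hKLpos a), ← hcolumn]
    exact single_le_sum (fun j _ => (hpos j a).le) (mem_univ i)
  · have hx : 0 ≤ p i a / pKL a := div_nonneg (hpos i a).le (hKLpos a).le
    have hklFun : klFun (p i a / pKL a) ≤ η / m := by
      rw [le_div_iff₀ hm, mul_comm]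
      calc m * klFun (p i a / pKL a) ≤ pKL a * klFun (p i a / pKL a) :=
            mul_le_mul_of_nonneg_right (ciInf_le (Finite.bddBelow_range _) a) (klFun_nonneg hx)
        _ ≤ KLdiv (p i) pKL :=
            mul_klFun_le_KLdiv (fun b => (hpos i b).le) hKLpos (hmass i) a
        _ ≤ η := hη i
    have hη₀ : 0 ≤ η := by
      simpa using (le_div_iff₀ hm).mp ((klFun_nonneg hx).trans hklFun)
    exact (le_one_add_sqrt_sq_of_klFun_le hx hklFun).trans (one_add_sqrt_div_sq_le hm hη₀)
end

section
/- Let 𝒜 be a finite set with K = |𝒜| elements, let π₁,…,π_N be strictly positive probability distributions on 𝒜 with KL-barycenter π_KL = (1/N)∑_{i=1}^N π_i, and suppose D_KL(π_i ‖ π_KL) ≤ η for all i with η < 1, and π_KL(a) > 0 for all a. With λ(η) = √η, the safe behavior policy π_safe^{√η}(a) = (1−√η) π_KL(a) + √η/K satisfies σ_safe := max_{1≤i≤N} max_{a∈𝒜} π_i(a)/π_safe^{√η}(a) ≤ min( N/(1−√η) , 1/(1−√η) + 2√η·K + 2√(2K√η)/√(1−√η) ). -/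
/-!
Write `s = √η`. Since `π_i ≤ N π_KL` and `π_safe ≥ (1 - s) π_KL`, every ratio is at most
`N / (1 - s)`. For the second bound, the recentred terms `π_i log (π_i / π_KL) - π_i + π_KL` of the
KL sum are nonnegative and each dominates `(√π_i - √π_KL)²`, so `π_i(a) ≤ (√π_KL(a) + s)²`.
Expanding the square and dividing by `π_safe(a) = (1 - s) π_KL(a) + s / K` leaves three terms,
bounded by `1 / (1 - s)`, `s K` and, by AM-GM on the denominator, `√(s K) / √(1 - s)`.
-/

open Finset Real

/-- `x log (x / t) = 2 x log (√x / √t) ≥ 2 x - 2 √x √t`, by `log y ≥ 1 - 1 / y`. -/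
lemma sq_sqrt_sub_sqrt_le_mul_log_div {x t : ℝ} (hx : 0 < x) (ht : 0 < t) :
    (√x - √t) ^ 2 ≤ x * log (x / t) - x + t := by
  obtain ⟨u, hu, rfl⟩ : ∃ u, 0 < u ∧ x = u ^ 2 := ⟨√x, sqrt_pos.2 hx, (sq_sqrt hx.le).symm⟩
  obtain ⟨v, hv, rfl⟩ : ∃ v, 0 < v ∧ t = v ^ 2 := ⟨√t, sqrt_pos.2 ht, (sq_sqrt ht.le).symm⟩
  have hlog : 1 - v / u ≤ log (u / v) := by
    simpa using one_sub_inv_le_log_of_pos (div_pos hu hv)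
  have hscaled : u ^ 2 - u * v ≤ u ^ 2 * log (u / v) := by
    have hexpand : u ^ 2 * (1 - v / u) = u ^ 2 - u * v := by field_simp
    linarith [mul_le_mul_of_nonneg_left hlog (sq_nonneg u)]
  rw [sqrt_sq hu.le, sqrt_sq hv.le, ← div_pow, log_pow]
  push_cast
  linear_combination 2 * hscaled

lemma KLdiv_eq_sum_mul_log_div_sub_add {α : Type*} [Fintype α] {ν μ : α → ℝ}
    (h : ∑ a, ν a = ∑ a, μ a) :
    KLdiv ν μ = ∑ a, (ν a * log (ν a / μ a) - ν a + μ a) := by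
  rw [KLdiv, sum_add_distrib, sum_sub_distrib, h, sub_add_cancel]

lemma sq_sqrt_sub_sqrt_le_KLdiv {α : Type*} [Fintype α] {ν μ : α → ℝ}
    (hν : ∀ a, 0 < ν a) (hμ : ∀ a, 0 < μ a) (h : ∑ a, ν a = ∑ a, μ a) (a : α) :
    (√(ν a) - √(μ a)) ^ 2 ≤ KLdiv ν μ := by
  have hterm b := sq_sqrt_sub_sqrt_le_mul_log_div (hν b) (hμ b)
  rw [KLdiv_eq_sum_mul_log_div_sub_add h]
  exact (hterm a).trans <|
    single_le_sum (fun b _ ↦ (sq_nonneg _).trans (hterm b)) (mem_univ a)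

lemma le_sq_sqrt_add_sqrt_of_KLdiv_le {α : Type*} [Fintype α] {ν μ : α → ℝ} {η : ℝ}
    (hν : ∀ a, 0 < ν a) (hμ : ∀ a, 0 < μ a) (h : ∑ a, ν a = ∑ a, μ a)
    (hη : KLdiv ν μ ≤ η) (a : α) :
    ν a ≤ (√(μ a) + √η) ^ 2 := by
  have hdiff : √(ν a) - √(μ a) ≤ √η :=
    (le_abs_self _).trans (abs_le_sqrt ((sq_sqrt_sub_sqrt_le_KLdiv hν hμ h a).trans hη))
  calc ν a = √(ν a) ^ 2 := (sq_sqrt (hν a).le).symm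
    _ ≤ (√(μ a) + √η) ^ 2 := by gcongr; linarith

lemma sum_mean_eq_one {α : Type*} [Fintype α] {N : ℕ} (hN : N ≠ 0) {p : Fin N → α → ℝ}
    (hsum : ∀ i, ∑ a, p i a = 1) :
    ∑ a, (1 / (N : ℝ)) * ∑ i, p i a = 1 := by
  rw [← mul_sum, sum_comm]
  simp [hsum, hN]

lemma le_card_mul_mean {N : ℕ} {f : Fin N → ℝ} (hf : ∀ j, 0 ≤ f j) (i : Fin N) :
    f i ≤ N * ((1 / (N : ℝ)) * ∑ j, f j) := by
  rw [← mul_assoc, mul_one_div_cancel (Nat.cast_ne_zero.2 i.pos.ne'), one_mul]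
  exact single_le_sum (fun j _ ↦ hf j) (mem_univ i)

section Mixture

variable {x t s R : ℝ}

lemma div_mix_le_of_le_mul {c : ℝ} (ht : 0 < t) (hs0 : 0 ≤ s) (hs1 : s < 1) (hR : 0 ≤ R)
    (hc : 0 ≤ c) (hx : x ≤ c * t) :
    x / ((1 - s) * t + s / R) ≤ c / (1 - s) :=
  calc x / ((1 - s) * t + s / R) ≤ c * t / ((1 - s) * t) :=
        div_le_div₀ (by positivity) hx (mul_pos (by linarith) ht)
          (le_add_of_nonneg_right (div_nonneg hs0 hR))
    _ = c / (1 - s) := mul_div_mul_right _ _ ht.ne'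

lemma two_mul_mul_sqrt_le (ht : 0 ≤ t) (hs0 : 0 ≤ s) (hs1 : s < 1) (hR : 0 < R) :
    2 * s * √t ≤ √(s * R) / √(1 - s) * ((1 - s) * t + s / R) := by
  have hw : 0 < √(1 - s) := sqrt_pos.2 (by linarith)
  have hk : 0 < √R := sqrt_pos.2 hR
  have hD : (1 - s) * t + s / R = (√(1 - s) * √t) ^ 2 + (√s / √R) ^ 2 := by
    rw [mul_pow, div_pow, sq_sqrt (by linarith), sq_sqrt ht, sq_sqrt hs0, sq_sqrt hR.le]
  have hprod : 2 * s * √t = √s * √R / √(1 - s) * (2 * (√(1 - s) * √t) * (√s / √R)) := by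
    field_simp
    rw [sq_sqrt hs0, mul_comm]
  rw [sqrt_mul hs0, hD, hprod]
  gcongr
  exact two_mul_le_add_sq _ _

lemma div_mix_le_of_le_sq (ht : 0 < t) (hs0 : 0 ≤ s) (hs1 : s < 1) (hR : 0 < R)
    (hx : x ≤ (√t + s) ^ 2) :
    x / ((1 - s) * t + s / R) ≤ 1 / (1 - s) + s * R + √(s * R) / √(1 - s) := by
  have h1s : 0 < 1 - s := by linarith
  set D := (1 - s) * t + s / R with hD
  have hDpos : 0 < D := by positivity
  have hmain : t ≤ 1 / (1 - s) * D := by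
    rw [hD, one_div_mul_eq_div, le_div_iff₀ h1s]
    linarith [div_nonneg hs0 hR.le]
  have hconst : s ^ 2 ≤ s * R * D := by
    have hexpand : s * R * D = s * R * ((1 - s) * t) + s ^ 2 := by rw [hD]; field_simp
    nlinarith [mul_nonneg (mul_nonneg hs0 hR.le) (mul_nonneg h1s.le ht.le)]
  rw [div_le_iff₀ hDpos]
  calc x ≤ t + 2 * s * √t + s ^ 2 := by rwa [add_sq, sq_sqrt ht.le, mul_right_comm] at hx
    _ ≤ 1 / (1 - s) * D + √(s * R) / √(1 - s) * D + s * R * D := by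
      linarith [two_mul_mul_sqrt_le ht.le hs0 hs1 hR]
    _ = (1 / (1 - s) + s * R + √(s * R) / √(1 - s)) * D := by ring

end Mixture

theorem sigma_safe_bound_tuned_general {α : Type*} [Fintype α] (N : ℕ)
    (K : ℕ) (hK : K = Fintype.card α)
    (p : Fin N → α → ℝ)
    (hpos : ∀ i a, 0 < p i a) (hsum : ∀ i, ∑ a, p i a = 1)
    (pKL : α → ℝ) (hpKL : ∀ a, pKL a = (1 / (N : ℝ)) * ∑ i, p i a)
    (hKLpos : ∀ a, 0 < pKL a)
    (η : ℝ) (hη : ∀ i, KLdiv (p i) pKL ≤ η) (hη1 : η < 1)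
    (psafe : α → ℝ)
    (hpsafe : ∀ a, psafe a = (1 - Real.sqrt η) * pKL a + Real.sqrt η / (K : ℝ)) :
    (⨆ i : Fin N, ⨆ a : α, p i a / psafe a)
      ≤ min ((N : ℝ) / (1 - Real.sqrt η))
          (1 / (1 - Real.sqrt η) + 2 * Real.sqrt η * (K : ℝ)
            + 2 * Real.sqrt (2 * (K : ℝ) * Real.sqrt η) / Real.sqrt (1 - Real.sqrt η)) := by
  set s := √η
  have hs0 : 0 ≤ s := sqrt_nonneg η
  have hs1 : s < 1 := (sqrt_lt' one_pos).2 (by simpa using hη1)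
  have h1s : 0 < 1 - s := by linarith
  have hweaken : 1 / (1 - s) + s * K + √(s * K) / √(1 - s)
      ≤ 1 / (1 - s) + 2 * s * K + 2 * √(2 * K * s) / √(1 - s) := by
    have hsK : 0 ≤ s * K := by positivity
    have hsqrt : √(s * K) ≤ 2 * √(2 * K * s) :=
      (sqrt_le_sqrt (by linarith)).trans (le_mul_of_one_le_left (sqrt_nonneg _) one_le_two)
    gcongr
    linarith
  have hbound_nonneg : 0 ≤ min ((N : ℝ) / (1 - s))
      (1 / (1 - s) + 2 * s * K + 2 * √(2 * K * s) / √(1 - s)) :=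
    le_min (div_nonneg (Nat.cast_nonneg N) h1s.le)
      (add_nonneg (add_nonneg (one_div_nonneg.2 h1s.le) (by positivity)) (by positivity))
  refine Real.iSup_le (fun i ↦ Real.iSup_le (fun a ↦ ?_) hbound_nonneg) hbound_nonneg
  have hKpos : (0 : ℝ) < K := by rw [hK]; exact_mod_cast Fintype.card_pos_iff.2 ⟨a⟩
  have hmass_eq : ∑ a, pKL a = ∑ a, p i a := by
    simp_rw [hpKL, hsum, sum_mean_eq_one (Fin.pos i).ne' hsum]
  rw [hpsafe]
  refine le_min (div_mix_le_of_le_mul (hKLpos a) hs0 hs1 hKpos.le (Nat.cast_nonneg N) ?_)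
    ((div_mix_le_of_le_sq (hKLpos a) hs0 hs1 hKpos ?_).trans hweaken)
  · rw [hpKL]
    exact le_card_mul_mean (fun j ↦ (hpos j a).le) i
  · exact le_sq_sqrt_add_sqrt_of_KLdiv_le (hpos i) hKLpos hmass_eq.symm (hη i) a

/-- with the tuning `λ(η) = √η` (for `η < 1`), the safe behavior policy
`π_safe^{√η}(a) = (1−√η)π_KL(a) + √η/K` satisfies
`σ_safe ≤ min(N/(1−√η), 1/(1−√η) + 2√η·K + 2√(2K√η)/√(1−√η))`. -/
theorem sigma_safe_bound_tuned {α : Type*} [Fintype α] [Nonempty α] (N : ℕ) (hN : 0 < N)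
    (K : ℕ) (hK : K = Fintype.card α)
    (p : Fin N → α → ℝ)
    (hpos : ∀ i a, 0 < p i a) (hsum : ∀ i, ∑ a, p i a = 1)
    (pKL : α → ℝ) (hpKL : ∀ a, pKL a = (1 / (N : ℝ)) * ∑ i, p i a)
    (hKLpos : ∀ a, 0 < pKL a)
    (η : ℝ) (hη : ∀ i, KLdiv (p i) pKL ≤ η) (hη1 : η < 1)
    (psafe : α → ℝ)
    (hpsafe : ∀ a, psafe a = (1 - Real.sqrt η) * pKL a + Real.sqrt η / (K : ℝ)) :
    (⨆ i : Fin N, ⨆ a : α, p i a / psafe a)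
      ≤ min ((N : ℝ) / (1 - Real.sqrt η))
          (1 / (1 - Real.sqrt η) + 2 * Real.sqrt η * (K : ℝ)
            + 2 * Real.sqrt (2 * (K : ℝ) * Real.sqrt η) / Real.sqrt (1 - Real.sqrt η)) :=
  sigma_safe_bound_tuned_general N K hK p hpos hsum pKL hpKL hKLpos η hη hη1 psafe hpsafe
end

section
/- Consider a multi-armed bandit with finite action set 𝒜 and reward distributions P_a supported on [0, R*], with means Q(a) and policy values v(π) = ∑_a π(a)Q(a). Let the set of N strictly positive target policies be partitioned into M disjoint clusters K₁,…,K_M of sizes N₁,…,N_M, with cluster barycenters π_KL^{(j)} = (1/N_j)∑_{π∈K_j} π and σ_c = max_j max_{π∈K_j} max_{a} π(a)/π_KL^{(j)}(a). Assume: (i) the overall best target policy lies in cluster 1, i.e. v(π*) = v(π*^{(1)}) where π*^{(j)} = argmax_{π∈K_j} v(π); and (ii) v(π*^{(1)}) − v(π*^{(j)}) > Δ for some Δ > 0 and all j = 2,…,M. For each cluster j, collect an independent dataset of n_j i.i.d. pairs (A_t^{(j)}, R_t^{(j)}) with A_t^{(j)} ∼ π_KL^{(j)} and R_t^{(j)}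 | A_t^{(j)} = a ∼ P_a, with n₁ = ⋯ = n_M, and form v̂_n^{(j)}(π) = (1/n_j)∑_{t=1}^{n_j} (π(A_t^{(j)})/π_KL^{(j)}(A_t^{(j)})) R_t^{(j)} for π ∈ K_j. Let π̂_n be any selection maximizing v̂_n^{(j)}(π) over all j and π ∈ K_j. Then for any δ ∈ (0,1) and ε ∈ (0, Δ], if the total sample size n = n₁·M satisfies n ≥ 2 M R*² σ_c² log( ((M−2)(N₁+1) + N + M)/δ ) / ε², then P( π̂_n ∉ K₁ ) ≤ δ. -/
/-!
Every target policy outside the best cluster can only be selected if its importance-sampling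
estimate beats that of the best policy `π*⁽¹⁾` of cluster 1. The two estimates are computed from
independent datasets, and each is an average of `n₁` i.i.d. terms in `[0, R* σ_c]` whose means
are the true values, so by Hoeffding's lemma their difference is sub-Gaussian; since the true
values differ by more than `Δ ≥ ε`, the Chernoff bound makes that event exponentially unlikely in
`n₁ ε² / (R* σ_c)²`. A union bound over the policies outside cluster 1 and the sample-size
assumption finish the proof.
-/

open Finset Real MeasureTheory ProbabilityTheory

open scoped NNReal

lemma sum_uniformAverage_eq_one {ι α : Type*} [Fintype α] {s : Finset ι} (hs : s.Nonempty)
    {p : ι → α → ℝ} (hp : ∀ i ∈ s, ∑ a, p i a = 1) :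
    ∑ a, 1 / (#s : ℝ) * ∑ i ∈ s, p i a = 1 := by
  rw [← Finset.mul_sum, Finset.sum_comm, Finset.sum_congr rfl hp, sum_const, nsmul_one]
  have : (#s : ℝ) ≠ 0 := Nat.cast_ne_zero.2 hs.card_pos.ne'
  field_simp

lemma uniformAverage_pos {ι α : Type*} {s : Finset ι} (hs : s.Nonempty) {p : ι → α → ℝ}
    {a : α} (hp : ∀ i ∈ s, 0 < p i a) : 0 < 1 / (#s : ℝ) * ∑ i ∈ s, p i a :=
  mul_pos (by simpa using hs.card_pos) (sum_pos hp hs)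

/-- The paper's count `(M - 2)(N₁ + 1) + N + M` dominates the `N - N₁` comparisons that the
union bound actually needs. -/
lemma card_filter_ne_le {ι κ : Type*} [Fintype ι] [DecidableEq κ] (c : ι → κ) (j : κ) {m : ℝ}
    (hm : 1 ≤ m) :
    (#{i | c i ≠ j} : ℝ) ≤ (m - 2) * (#{i | c i = j} + 1) + Fintype.card ι + m := by
  have hsplit : (#{i | c i = j} : ℝ) + #{i | c i ≠ j} = Fintype.card ι := by
    exact_mod_cast card_filter_add_card_filter_not (s := univ) (fun i => c i = j)
  nlinarith [mul_nonneg (sub_nonneg.2 hm) (Nat.cast_nonneg (α := ℝ) #{i | c i = j})]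

lemma log_le_of_sampleSize {n m B ε L : ℝ} (hn : 0 ≤ n) (hm : 0 < m) (hB : B ≠ 0) (hε : 0 < ε)
    (h : 2 * m * B ^ 2 * L / ε ^ 2 ≤ n * m) : L ≤ n * ε ^ 2 / B ^ 2 := by
  have hB2 : 0 < B ^ 2 := by positivity
  rw [div_le_iff₀ (by positivity)] at h
  rw [le_div_iff₀ hB2]
  nlinarith [mul_nonneg hn (sq_nonneg ε)]

lemma mul_exp_neg_le_of_log_div_le {K C δ x : ℝ} (hKC : K ≤ C) (hδ : 0 < δ)
    (hx : log (C / δ) ≤ x) : K * exp (-x) ≤ δ := by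
  rcases le_or_gt K 0 with hK | hK
  · exact (mul_nonpos_of_nonpos_of_nonneg hK (exp_pos _).le).trans hδ.le
  have hC : 0 < C := hK.trans_le hKC
  calc K * exp (-x) ≤ C * exp (-log (C / δ)) := by gcongr
    _ = δ := by rw [exp_neg, exp_log (div_pos hC hδ)]; field_simp

lemma measure_cluster_argmax_ne_le {Ω ι κ : Type*} [MeasurableSpace Ω] [Fintype ι]
    [DecidableEq κ] (μ : Measure Ω) [IsFiniteMeasure μ] (c : ι → κ) {i₀ : ι} {S : Ω → ι → ℝ}
    {iHat : Ω → ι} (hmax : ∀ ω i, S ω i ≤ S ω (iHat ω)) {r : ℝ}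
    (hr : ∀ i, c i ≠ c i₀ → μ.real {ω | S ω i₀ ≤ S ω i} ≤ r) :
    μ {ω | c (iHat ω) ≠ c i₀} ≤ ENNReal.ofReal (#{i | c i ≠ c i₀} * r) := by
  have hsub : {ω | c (iHat ω) ≠ c i₀}
      ⊆ ⋃ i ∈ ({i | c i ≠ c i₀} : Finset ι), {ω | S ω i₀ ≤ S ω i} :=
    fun ω hω => Set.mem_biUnion (x := iHat ω) (by simpa using hω) (hmax ω i₀)
  rw [← ofReal_measureReal]
  refine ENNReal.ofReal_le_ofReal ?_
  calc μ.real {ω | c (iHat ω) ≠ c i₀}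
      ≤ ∑ i ∈ ({i | c i ≠ c i₀} : Finset ι), μ.real {ω | S ω i₀ ≤ S ω i} :=
        (measureReal_mono hsub (measure_ne_top _ _)).trans (measureReal_biUnion_finset_le _ _)
    _ ≤ ∑ _i ∈ ({i | c i ≠ c i₀} : Finset ι), r := sum_le_sum fun i hi => hr i (by simpa using hi)
    _ = #{i | c i ≠ c i₀} * r := by rw [sum_const, nsmul_eq_mul]

lemma ProbabilityTheory.HasSubgaussianMGF.comp_eval {ι : Type*} [Fintype ι] {Ω : ι → Type*}
    [∀ i, MeasurableSpace (Ω i)] {ν : ∀ i, Measure (Ω i)} [∀ i, IsProbabilityMeasure (ν i)]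
    {j : ι} {X : Ω j → ℝ} {c : ℝ≥0} (h : HasSubgaussianMGF X c (ν j)) :
    HasSubgaussianMGF (fun ω => X (ω j)) c (Measure.pi ν) :=
  HasSubgaussianMGF.of_map (measurable_pi_apply j).aemeasurable
    (by rwa [(measurePreserving_eval ν j).map_eq])

section Hoeffding

variable {β : Type*} [MeasurableSpace β]

lemma hasSubgaussianMGF_sum_pi {ι : Type*} [Fintype ι] {μ : Measure β} [IsProbabilityMeasure μ]
    {f : β → ℝ} {a b : ℝ} (hf : Measurable f) (hab : ∀ᵐ x ∂μ, f x ∈ Set.Icc a b) :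
    HasSubgaussianMGF (fun x : ι → β => ∑ t, (f (x t) - μ[f]))
      (Fintype.card ι * (‖b - a‖₊ / 2) ^ 2) (Measure.pi fun _ => μ) := by
  have hindep : iIndepFun (fun t (x : ι → β) => f (x t) - μ[f]) (Measure.pi fun _ => μ) :=
    iIndepFun_pi (X := fun _ y => f y - μ[f]) fun _ => (hf.sub_const _).aemeasurable
  simpa using HasSubgaussianMGF.sum_of_iIndepFun hindep (s := univ)
    fun t _ => HasSubgaussianMGF.comp_eval (ν := fun _ : ι => μ) (j := t)
      (hasSubgaussianMGF_of_mem_Icc hf.aemeasurable hab)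

lemma measureReal_sum_le_sum_le {ι : Type*} [Fintype ι] {μ : ι → Measure β}
    [∀ i, IsProbabilityMeasure (μ i)] {n : ℕ} {j k : ι} (hjk : j ≠ k) {f g : β → ℝ} {B ε : ℝ}
    (hf : Measurable f) (hg : Measurable g) (hfB : ∀ᵐ x ∂μ j, f x ∈ Set.Icc 0 B)
    (hgB : ∀ᵐ x ∂μ k, g x ∈ Set.Icc 0 B) (hε : 0 ≤ ε) (hgap : (μ j)[f] + ε ≤ (μ k)[g]) :
    (Measure.pi fun i => Measure.pi fun _ : Fin n => μ i).real
        {ω | ∑ t, g (ω k t) ≤ ∑ t, f (ω j t)} ≤ exp (-(n * ε ^ 2 / B ^ 2)) := by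
  set ν : ι → Measure (Fin n → β) := fun i => Measure.pi fun _ => μ i
  set F := fun x : Fin n → β => ∑ t, (f (x t) - (μ j)[f])
  set G := fun x : Fin n → β => ∑ t, (g (x t) - (μ k)[g])
  have hF := (hasSubgaussianMGF_sum_pi hf hfB).comp_eval (ν := ν) (j := j)
  have hG := (hasSubgaussianMGF_sum_pi hg hgB).comp_eval (ν := ν) (j := k)
  have hblocks : IndepFun (fun ω : ι → Fin n → β => ω j) (fun ω => ω k) (Measure.pi ν) :=
    (iIndepFun_pi (X := fun _ x => x) fun _ => aemeasurable_id).indepFun hjk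
  have hindep := hblocks.comp (φ := F) (ψ := G) (by fun_prop) (by fun_prop)
  have hevent : {ω : ι → Fin n → β | ∑ t, g (ω k t) ≤ ∑ t, f (ω j t)}
      ⊆ {ω | n * ε ≤ F (ω j) - G (ω k)} := by
    intro ω hω
    simp only [Set.mem_ofPred_eq, F, G, Finset.sum_sub_distrib, sum_const, card_univ,
      Fintype.card_fin, nsmul_eq_mul] at hω ⊢
    linarith [mul_le_mul_of_nonneg_left hgap (Nat.cast_nonneg (α := ℝ) n)]
  refine (measureReal_mono hevent).trans <|
    ((hF.sub_of_indepFun hG hindep).measure_ge_le (by positivity)).trans_eq ?_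
  rcases eq_or_ne n 0 with rfl | hn
  · simp
  · push_cast
    rw [Fintype.card_fin, sub_zero, Real.norm_eq_abs, div_pow, sq_abs,
      show (2 : ℝ) * (n * (B ^ 2 / 2 ^ 2) + n * (B ^ 2 / 2 ^ 2)) = n * B ^ 2 by ring]
    field_simp

end Hoeffding

section ImportanceSampling

variable {α : Type*} [Fintype α] [MeasurableSpace α] {P : α → Measure ℝ}

/-- The law of `(A, R)` with `A ∼ w` and `R | A = a ∼ P a`. -/
noncomputable def sampleLaw (w : α → ℝ) (P : α → Measure ℝ) : Measure (α × ℝ) :=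
  ∑ a, ENNReal.ofReal (w a) • (Measure.dirac a).prod (P a)

noncomputable def importanceWeighted (q w : α → ℝ) (z : α × ℝ) : ℝ := q z.1 / w z.1 * z.2

noncomputable def importanceEstimate {n : ℕ} (q w : α → ℝ) (x : Fin n → α × ℝ) : ℝ :=
  1 / (n : ℝ) * ∑ t, importanceWeighted q w (x t)

lemma isProbabilityMeasure_sampleLaw [∀ a, IsProbabilityMeasure (P a)] {w : α → ℝ}
    (hw : ∀ a, 0 ≤ w a) (hw₁ : ∑ a, w a = 1) : IsProbabilityMeasure (sampleLaw w P) := by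
  constructor
  simp only [sampleLaw, Measure.coe_finsetSum, Measure.coe_smul, Finset.sum_apply,
    Pi.smul_apply, measure_univ, smul_eq_mul, mul_one]
  rw [← ENNReal.ofReal_sum_of_nonneg fun a _ => hw a, hw₁, ENNReal.ofReal_one]

lemma ae_snd_mem_sampleLaw [∀ a, SFinite (P a)] {w : α → ℝ} {s : Set ℝ} (hs : MeasurableSet s)
    (h : ∀ a, ∀ᵐ x ∂P a, x ∈ s) : ∀ᵐ z ∂sampleLaw w P, z.2 ∈ s := by
  rw [sampleLaw, ae_finsetSum_measure_iff]
  intro a _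
  refine Measure.ae_smul_measure ?_ _
  rw [Measure.dirac_prod, ae_map_iff measurable_prodMk_left.aemeasurable (measurable_snd hs)]
  exact h a

lemma integral_sampleLaw [∀ a, SFinite (P a)] {w : α → ℝ} (hw : ∀ a, 0 ≤ w a)
    {h : α × ℝ → ℝ} (hm : Measurable h) (hi : ∀ a, Integrable (fun x => h (a, x)) (P a)) :
    ∫ z, h z ∂sampleLaw w P = ∑ a, w a * ∫ x, h (a, x) ∂P a := by
  have hint : ∀ a, Integrable h ((P a).map (Prod.mk a)) := fun a => by
    rw [integrable_map_measure hm.aestronglyMeasurable measurable_prodMk_left.aemeasurable]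
    exact hi a
  rw [sampleLaw, integral_finsetSum_measure fun a _ => by
    rw [Measure.dirac_prod]; exact (hint a).smul_measure ENNReal.ofReal_ne_top]
  refine Finset.sum_congr rfl fun a _ => ?_
  rw [Measure.dirac_prod, integral_smul_measure, ENNReal.toReal_ofReal (hw a),
    integral_map measurable_prodMk_left.aemeasurable hm.aestronglyMeasurable, smul_eq_mul]

lemma measurable_importanceWeighted [MeasurableSingletonClass α] (q w : α → ℝ) :
    Measurable (importanceWeighted q w) :=
  ((measurable_of_countable fun a => q a / w a).comp measurable_fst).mul measurable_snd

lemma integral_importanceWeighted_sampleLaw [MeasurableSingletonClass α] [∀ a, SFinite (P a)]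
    {w : α → ℝ} (hw : ∀ a, 0 < w a) (q : α → ℝ) (hP : ∀ a, Integrable id (P a)) :
    ∫ z, importanceWeighted q w z ∂sampleLaw w P = ∑ a, q a * ∫ x, x ∂P a := by
  rw [integral_sampleLaw (fun a => (hw a).le) (measurable_importanceWeighted q w)
    fun a => (hP a).const_mul (q a / w a)]
  refine Finset.sum_congr rfl fun a _ => ?_
  change w a * ∫ x, q a / w a * x ∂P a = _
  rw [integral_const_mul, ← mul_assoc, mul_div_cancel₀ _ (hw a).ne']

lemma ae_importanceWeighted_mem_Icc [∀ a, SFinite (P a)] {w q : α → ℝ} {R σ : ℝ}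
    (hP : ∀ a, ∀ᵐ x ∂P a, x ∈ Set.Icc 0 R) (hq : ∀ a, q a / w a ∈ Set.Icc 0 σ) :
    ∀ᵐ z ∂sampleLaw w P, importanceWeighted q w z ∈ Set.Icc 0 (R * σ) := by
  filter_upwards [ae_snd_mem_sampleLaw measurableSet_Icc hP] with z ⟨hz₀, hzR⟩
  obtain ⟨hq₀, hqσ⟩ := hq z.1
  exact ⟨mul_nonneg hq₀ hz₀, by rw [mul_comm R]; exact mul_le_mul hqσ hzR hz₀ (hq₀.trans hqσ)⟩

lemma measureReal_importanceEstimate_le [MeasurableSingletonClass α]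
    [∀ a, IsProbabilityMeasure (P a)] {R : ℝ} (hP : ∀ a, ∀ᵐ x ∂P a, x ∈ Set.Icc 0 R)
    {ι : Type*} [Fintype ι] {w : ι → α → ℝ} (hw : ∀ j a, 0 < w j a) (hw₁ : ∀ j, ∑ a, w j a = 1)
    {n : ℕ} {j k : ι} (hjk : j ≠ k) {q q' : α → ℝ} {σ ε : ℝ}
    (hq : ∀ a, q a / w j a ∈ Set.Icc 0 σ) (hq' : ∀ a, q' a / w k a ∈ Set.Icc 0 σ) (hε : 0 ≤ ε)
    (hgap : ∑ a, q a * ∫ x, x ∂P a + ε ≤ ∑ a, q' a * ∫ x, x ∂P a) :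
    (Measure.pi fun i => Measure.pi fun _ : Fin n => sampleLaw (w i) P).real
        {ω | importanceEstimate q' (w k) (ω k) ≤ importanceEstimate q (w j) (ω j)}
      ≤ exp (-(n * ε ^ 2 / (R * σ) ^ 2)) := by
  have := fun i => isProbabilityMeasure_sampleLaw (P := P) (fun a => (hw i a).le) (hw₁ i)
  have hPint : ∀ a, Integrable id (P a) := fun a =>
    Integrable.of_mem_Icc 0 R measurable_id.aemeasurable (hP a)
  refine (measureReal_mono fun ω hω => ?_).trans <| measureReal_sum_le_sum_le hjk
    (measurable_importanceWeighted q (w j)) (measurable_importanceWeighted q' (w k))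
    (ae_importanceWeighted_mem_Icc hP hq) (ae_importanceWeighted_mem_Icc hP hq') hε
    (by rwa [integral_importanceWeighted_sampleLaw (hw j) q hPint,
      integral_importanceWeighted_sampleLaw (hw k) q' hPint])
  rcases n.eq_zero_or_pos with rfl | hn
  · simp
  · exact le_of_mul_le_mul_left (a := 1 / (n : ℝ)) hω (by positivity)

end ImportanceSampling

theorem clustered_best_cluster_general {α : Type*} [Fintype α] [MeasurableSpace α]
    [MeasurableSingletonClass α]
    (Rstar : ℝ) (hR : 0 < Rstar)
    (P : α → Measure ℝ) (hprob : ∀ a, IsProbabilityMeasure (P a))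
    (hsupp : ∀ a, P a (Set.Icc 0 Rstar) = 1)
    (Q : α → ℝ) (hQ : ∀ a, Q a = ∫ x, x ∂(P a))
    (N M : ℕ) (hN : 0 < N) (hM : 0 < M)
    (p : Fin N → α → ℝ) (hpos : ∀ i a, 0 < p i a) (hsum : ∀ i, ∑ a, p i a = 1)
    -- the cluster assignment, cluster sizes, and cluster barycenters
    (c : Fin N → Fin M)
    (Nsz : Fin M → ℕ) (hNsz : ∀ j, Nsz j = (Finset.univ.filter fun i => c i = j).card)
    (hNszpos : ∀ j, 0 < Nsz j)
    (pKLc : Fin M → α → ℝ)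
    (hpKLc : ∀ j a, pKLc j a
      = (1 / (Nsz j : ℝ)) * ∑ i ∈ Finset.univ.filter (fun i => c i = j), p i a)
    -- the uniform maximal importance weight over the clusters
    (σc : ℝ) (hσc : σc = ⨆ i : Fin N, ⨆ a : α, p i a / pKLc (c i) a)
    -- values, the overall best policy, and per-cluster best policies
    (v : (α → ℝ) → ℝ) (hv : ∀ q, v q = ∑ a, q a * Q a)
    (ibest : Fin M → Fin N) (hibestmem : ∀ j, c (ibest j) = j)
    (hibest : ∀ j i, c i = j → v (p i) ≤ v (p (ibest j)))
    -- Assumption (ii): the value gap between cluster 1 and the other clusters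
    (Δ : ℝ)
    (hgap : ∀ j : Fin M, j ≠ ⟨0, hM⟩ → v (p (ibest ⟨0, hM⟩)) - v (p (ibest j)) > Δ)
    -- equal per-cluster sample sizes and the mutually independent per-cluster datasets
    (n₁ : ℕ) (n : ℕ) (hn : n = n₁ * M)
    (μc : Fin M → Measure (α × ℝ))
    (hμc : ∀ j, μc j
      = ∑ a : α, (ENNReal.ofReal (pKLc j a)) • ((Measure.dirac a).prod (P a)))
    -- the per-cluster importance sampling estimates
    (vhat : (Fin M → Fin n₁ → α × ℝ) → Fin N → ℝ)
    (hvhat : ∀ ω i, vhat ω i = (1 / (n₁ : ℝ)) *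
      ∑ t, (p i (ω (c i) t).1 / pKLc (c i) (ω (c i) t).1) * (ω (c i) t).2)
    -- a measurable selection maximizing the estimated values
    (iHat : (Fin M → Fin n₁ → α × ℝ) → Fin N)
    (hargmax : ∀ ω i, vhat ω i ≤ vhat ω (iHat ω))
    (δ ε : ℝ) (hδ : δ ∈ Set.Ioo (0:ℝ) 1) (hε : ε ∈ Set.Ioc (0:ℝ) Δ)
    (hsample : (n : ℝ) ≥ 2 * M * Rstar ^ 2 * σc ^ 2 *
      Real.log ((((M : ℝ) - 2) * ((Nsz ⟨0, hM⟩ : ℝ) + 1) + N + M) / δ) / ε ^ 2) :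
    (Measure.pi (fun j : Fin M => Measure.pi (fun _ : Fin n₁ => μc j)))
        {ω | c (iHat ω) ≠ ⟨0, hM⟩}
      ≤ ENNReal.ofReal δ := by
  set j₀ : Fin M := ⟨0, hM⟩
  obtain rfl : μc = fun j => sampleLaw (pKLc j) P := funext hμc
  have hcluster : ∀ j, (univ.filter fun i => c i = j).Nonempty := fun j =>
    card_pos.1 (hNsz j ▸ hNszpos j)
  have hbary : ∀ j a, 0 < pKLc j a := fun j a => by
    simpa only [hpKLc, hNsz] using uniformAverage_pos (hcluster j) fun i _ => hpos i a
  have hbary₁ : ∀ j, ∑ a, pKLc j a = 1 := fun j => by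
    simp_rw [hpKLc, hNsz]
    exact sum_uniformAverage_eq_one (hcluster j) fun i _ => hsum i
  have hlaw := fun j => isProbabilityMeasure_sampleLaw (P := P) (fun a => (hbary j a).le) (hbary₁ j)
  have hratio : ∀ i a, p i a / pKLc (c i) a ∈ Set.Icc 0 σc := fun i a =>
    ⟨(div_pos (hpos i a) (hbary _ a)).le,
      hσc ▸ le_ciSup₂ (f := fun i a => p i a / pKLc (c i) a)
        (Set.finite_iUnion fun _ => Set.finite_range _).bddAbove i a⟩
  have hB : Rstar * σc ≠ 0 := by
    obtain ⟨a, -, -⟩ := exists_ne_zero_of_sum_ne_zero ((hsum ⟨0, hN⟩).trans_ne one_ne_zero)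
    exact (mul_pos hR ((div_pos (hpos ⟨0, hN⟩ a) (hbary _ a)).trans_le (hratio _ a).2)).ne'
  have hreward : ∀ a, ∀ᵐ x ∂P a, x ∈ Set.Icc 0 Rstar := fun a =>
    (ae_mem_iff_measure_eq measurableSet_Icc.nullMeasurableSet).2 (by rw [hsupp, measure_univ])
  have hpair : ∀ i, c i ≠ c (ibest j₀) →
      (Measure.pi fun j => Measure.pi fun _ : Fin n₁ => sampleLaw (pKLc j) P).real
        {ω | vhat ω (ibest j₀) ≤ vhat ω i} ≤ exp (-(n₁ * ε ^ 2 / (Rstar * σc) ^ 2)) := by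
    intro i hi
    have hvgap : v (p i) + ε ≤ v (p (ibest j₀)) := by
      linarith [hibest (c i) i rfl, hgap (c i) (hibestmem j₀ ▸ hi), hε.2]
    simp_rw [hvhat]
    exact measureReal_importanceEstimate_le hreward hbary hbary₁ hi (hratio i) (hratio _) hε.1.le
      (by simpa only [hv, hQ] using hvgap)
  have hcount := card_filter_ne_le c j₀ (m := M) (by exact_mod_cast hM)
  rw [Fintype.card_fin, ← hNsz] at hcount
  have hunion := measure_cluster_argmax_ne_le _ c hargmax hpair
  rw [hibestmem] at hunion
  refine hunion.trans (ENNReal.ofReal_le_ofReal (mul_exp_neg_le_of_log_div_le hcount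
    hδ.1 (log_le_of_sampleSize (Nat.cast_nonneg n₁) (Nat.cast_pos.2 hM) hB hε.1 ?_)))
  rw [hn, Nat.cast_mul] at hsample
  exact hsample.trans_eq' (by ring)

/-- with high probability, the clustered selection picks a policy from
the cluster that contains the best target policy.  Target policies `πᵢ` (`i : Fin N`)
are partitioned into `M` clusters via `c : Fin N → Fin M` (cluster `1` of the paper is
cluster `⟨0,_⟩` here), with cluster sizes `Nsz j`, cluster barycenters `π_KL^{(j)}`,
maximal weight `σ_c`, and per-cluster i.i.d. datasets of equal sizes `n₁`, mutually
independent.  If the total sample size `n = n₁·M` satisfies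
`n ≥ 2MR*²σ_c² log(((M−2)(N₁+1)+N+M)/δ)/ε²` for `ε ∈ (0, Δ]`, then the maximizing
selection `π̂ₙ` lies outside cluster `1` with probability at most `δ`. -/
theorem clustered_best_cluster {α : Type*} [Fintype α] [MeasurableSpace α]
    [MeasurableSingletonClass α]
    (Rstar : ℝ) (hR : 0 < Rstar)
    (P : α → Measure ℝ) (hprob : ∀ a, IsProbabilityMeasure (P a))
    (hsupp : ∀ a, P a (Set.Icc 0 Rstar) = 1)
    (Q : α → ℝ) (hQ : ∀ a, Q a = ∫ x, x ∂(P a))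
    (N M : ℕ) (hN : 0 < N) (hM : 0 < M)
    (p : Fin N → α → ℝ) (hpos : ∀ i a, 0 < p i a) (hsum : ∀ i, ∑ a, p i a = 1)
    -- the cluster assignment, cluster sizes, and cluster barycenters
    (c : Fin N → Fin M)
    (Nsz : Fin M → ℕ) (hNsz : ∀ j, Nsz j = (Finset.univ.filter fun i => c i = j).card)
    (hNszpos : ∀ j, 0 < Nsz j)
    (pKLc : Fin M → α → ℝ)
    (hpKLc : ∀ j a, pKLc j a
      = (1 / (Nsz j : ℝ)) * ∑ i ∈ Finset.univ.filter (fun i => c i = j), p i a)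
    -- the uniform maximal importance weight over the clusters
    (σc : ℝ) (hσc : σc = ⨆ i : Fin N, ⨆ a : α, p i a / pKLc (c i) a)
    -- values, the overall best policy, and per-cluster best policies
    (v : (α → ℝ) → ℝ) (hv : ∀ q, v q = ∑ a, q a * Q a)
    (istar : Fin N) (hstar : ∀ i, v (p i) ≤ v (p istar))
    (ibest : Fin M → Fin N) (hibestmem : ∀ j, c (ibest j) = j)
    (hibest : ∀ j i, c i = j → v (p i) ≤ v (p (ibest j)))
    -- Assumption (i): the overall best policy lies in cluster 1 (index `⟨0,_⟩`)
    (hclu1 : v (p istar) = v (p (ibest ⟨0, hM⟩)))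
    -- Assumption (ii): the value gap between cluster 1 and the other clusters
    (Δ : ℝ) (hΔpos : 0 < Δ)
    (hgap : ∀ j : Fin M, j ≠ ⟨0, hM⟩ → v (p (ibest ⟨0, hM⟩)) - v (p (ibest j)) > Δ)
    -- equal per-cluster sample sizes and the mutually independent per-cluster datasets
    (n₁ : ℕ) (hn₁ : 0 < n₁) (n : ℕ) (hn : n = n₁ * M)
    (μc : Fin M → Measure (α × ℝ))
    (hμc : ∀ j, μc j
      = ∑ a : α, (ENNReal.ofReal (pKLc j a)) • ((Measure.dirac a).prod (P a)))
    -- the per-cluster importance sampling estimates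
    (vhat : (Fin M → Fin n₁ → α × ℝ) → Fin N → ℝ)
    (hvhat : ∀ ω i, vhat ω i = (1 / (n₁ : ℝ)) *
      ∑ t, (p i (ω (c i) t).1 / pKLc (c i) (ω (c i) t).1) * (ω (c i) t).2)
    -- a measurable selection maximizing the estimated values
    (iHat : (Fin M → Fin n₁ → α × ℝ) → Fin N) (hmeas : Measurable iHat)
    (hargmax : ∀ ω i, vhat ω i ≤ vhat ω (iHat ω))
    (δ ε : ℝ) (hδ : δ ∈ Set.Ioo (0:ℝ) 1) (hε : ε ∈ Set.Ioc (0:ℝ) Δ)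
    (hsample : (n : ℝ) ≥ 2 * M * Rstar ^ 2 * σc ^ 2 *
      Real.log ((((M : ℝ) - 2) * ((Nsz ⟨0, hM⟩ : ℝ) + 1) + N + M) / δ) / ε ^ 2) :
    (Measure.pi (fun j : Fin M => Measure.pi (fun _ : Fin n₁ => μc j)))
        {ω | c (iHat ω) ≠ ⟨0, hM⟩}
      ≤ ENNReal.ofReal δ :=
  clustered_best_cluster_general Rstar hR P hprob hsupp Q hQ N M hN hM p hpos hsum c Nsz hNsz
    hNszpos pKLc hpKLc σc hσc v hv ibest hibestmem hibest Δ hgap n₁ n hn μc hμc vhat hvhat iHat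
    hargmax δ ε hδ hε hsample
end
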